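/- Let (W_∗, F^∗) be an ℝ-mixed Hodge structure on V. Then for all integers p,q, σ(I^{p,q}) ⊆ I^{q,p} + Σ_{r+s < p+q} I^{r,s}; that is, the conjugate of I^{p,q} is congruent to I^{q,p} modulo the sum of the Deligne subspaces of strictly smaller total weight. -/

import Mathlib

open TensorProduct

noncomputable section

namespace MHS

instance : RingHomSurjective (starRingEnd ℂ) :=
  ⟨fun x => ⟨star x, star_star x⟩⟩

variable (V : Type*) [AddCommGroup V] [Module ℝ V]

/-- The inclusion `v ↦ 1 ⊗ v` of `V` into its complexification `ℂ ⊗[ℝ] V`. -/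
def incl : V →ₗ[ℝ] ℂ ⊗[ℝ] V := TensorProduct.mk ℝ ℂ V 1

/-- Complex conjugation on the complexification `ℂ ⊗[ℝ] V`, as a
conjugate-linear (i.e. `starRingEnd ℂ`-semilinear) map. -/
def conjC : (ℂ ⊗[ℝ] V) →ₛₗ[starRingEnd ℂ] (ℂ ⊗[ℝ] V) where
  toFun := LinearMap.rTensor V (Complex.conjAe.toLinearMap : ℂ →ₗ[ℝ] ℂ)
  map_add' := fun x y => map_add _ x y
  map_smul' := by
    intro c x
    induction x using TensorProduct.induction_on with
    | zero => simp
    | tmul a v =>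
        simp only [TensorProduct.smul_tmul', LinearMap.rTensor_tmul, smul_eq_mul,
          AlgEquiv.toLinearMap_apply, map_mul, starRingEnd_apply]
        rfl
    | add x y hx hy =>
        simp only [smul_add, map_add]
        exact congrArg₂ (· + ·) hx hy

/-- The complexification `W ⊗ ℂ` of a real subspace `W ⊆ V`, as a complex
subspace of `ℂ ⊗[ℝ] V`. -/
def cx (W : Submodule ℝ V) : Submodule ℂ (ℂ ⊗[ℝ] V) :=
  Submodule.span ℂ (incl V '' (W : Set V))

variable {V}

/-- `(W, F)` is an `ℝ`-mixed Hodge structure on `V`:  `W` is an increasing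
exhaustive filtration of `V` by real subspaces, `F` a decreasing exhaustive
filtration of `ℂ ⊗[ℝ] V` by complex subspaces, and for every `n, p` the induced
filtration on `Gr^W_n = (W n ⊗ ℂ)/(W (n-1) ⊗ ℂ)` satisfies the weight `n`
Hodge decomposition conditions (expressed here at the level of preimages in
`W n ⊗ ℂ` of the relevant subspaces of the quotient). -/
structure IsRMHS (W : ℤ → Submodule ℝ V) (F : ℤ → Submodule ℂ (ℂ ⊗[ℝ] V)) : Prop where
  monoW : Monotone W
  antiF : Antitone F
  w_bot : ∃ a : ℤ, ∀ i ≤ a, W i = ⊥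
  w_top : ∃ b : ℤ, ∀ i, b ≤ i → W i = ⊤
  f_top : ∃ a : ℤ, ∀ p ≤ a, F p = ⊤
  f_bot : ∃ b : ℤ, ∀ p, b ≤ p → F p = ⊥
  gr_inf : ∀ n p : ℤ,
      ((F p ⊓ cx V (W n)) ⊔ cx V (W (n-1))) ⊓
        ((((F (n+1-p)).map (conjC V)) ⊓ cx V (W n)) ⊔ cx V (W (n-1)))
      = cx V (W (n-1))
  gr_sup : ∀ n p : ℤ,
      (F p ⊓ cx V (W n)) ⊔ ((((F (n+1-p)).map (conjC V)) ⊓ cx V (W n)) ⊔ cx V (W (n-1)))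
      = cx V (W n)

/-- The subspace `R^{p,q} = (W_{p+q} ⊗ ℂ) ∩ F^p`. -/
def Rpq (W : ℤ → Submodule ℝ V) (F : ℤ → Submodule ℂ (ℂ ⊗[ℝ] V)) (p q : ℤ) :
    Submodule ℂ (ℂ ⊗[ℝ] V) :=
  cx V (W (p + q)) ⊓ F p

/-- The subspace
`L^{p,q} = (W_{p+q} ⊗ ℂ) ∩ σ(F^q) + Σ_{i ≥ 2} (W_{p+q-i} ⊗ ℂ) ∩ σ(F^{q-i+1})`. -/
def Lpq (W : ℤ → Submodule ℝ V) (F : ℤ → Submodule ℂ (ℂ ⊗[ℝ] V)) (p q : ℤ) :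
    Submodule ℂ (ℂ ⊗[ℝ] V) :=
  (cx V (W (p + q)) ⊓ (F q).map (conjC V)) ⊔
    ⨆ i : ℤ, ⨆ _ : 2 ≤ i, (cx V (W (p + q - i)) ⊓ (F (q - i + 1)).map (conjC V))

/-- The Deligne subspace `I^{p,q} = R^{p,q} ∩ L^{p,q}`. -/
def Ipq (W : ℤ → Submodule ℝ V) (F : ℤ → Submodule ℂ (ℂ ⊗[ℝ] V)) (p q : ℤ) :
    Submodule ℂ (ℂ ⊗[ℝ] V) :=
  Rpq W F p q ⊓ Lpq W F p q

end MHS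

/-! Correction one weight at a time: if `z ∈ R^{p,q}` is congruent to an element of `L^{p,q}`
modulo `W_m ⊗ ℂ` with `m < p + q`, the Hodge decomposition of `Gr^W_m` splits the error into a
piece of `F^p` (subtracted from `z`, staying in `R^{p,q}` and costing only weight `< p + q`), a
piece of `σ(F^{m+1-p}) ∩ W_m`, which is one of the summands of `L^{p,q}`, and a piece of lower
weight. Hence `R^{p,q} ∩ (L^{p,q} + W_{p+q-1}) ⊆ I^{p,q} + W_{p+q-1}`. Conjugation sends
`R^{p,q}` into `L^{q,p}` and `L^{p,q}` into `R^{q,p} + W_{p+q-1}`, so by modularity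
`σ(I^{p,q}) ⊆ I^{q,p} + W_{p+q-1}`. Running the same correction down the Hodge filtration gives
`W_m ⊆ Σ_{r+s ≤ m} I^{r,s}`, which absorbs the error term. -/

theorem Int.induction_of_forall_le {P : ℤ → Prop} (a : ℤ) (hle : ∀ m ≤ a, P m)
    (step : ∀ m, P (m - 1) → P m) (m : ℤ) : P m :=
  Int.inductionOn' m a (hle a le_rfl) (fun k _ hk => by simpa using step (k + 1) (by simpa))
    (fun k hk _ => hle (k - 1) (by omega))

theorem Int.induction_of_forall_ge {P : ℤ → Prop} (b : ℤ) (hge : ∀ m, b ≤ m → P m)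
    (step : ∀ m, P (m + 1) → P m) (m : ℤ) : P m :=
  Int.inductionOn' m b (hge b le_rfl) (fun k hk _ => hge (k + 1) (by omega))
    (fun k _ hk => step (k - 1) (by simpa))

namespace MHS

variable {V : Type*} [AddCommGroup V] [Module ℝ V]

theorem conjC_conjC (x : ℂ ⊗[ℝ] V) : conjC V (conjC V x) = x := by
  induction x using TensorProduct.induction_on with
  | zero => simp
  | tmul a v => simp [conjC]
  | add x y hx hy => rw [map_add, map_add, hx, hy]

theorem map_conjC_map_conjC (S : Submodule ℂ (ℂ ⊗[ℝ] V)) :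
    (S.map (conjC V)).map (conjC V) = S := by
  ext x
  constructor
  · rintro ⟨_, ⟨y, hy, rfl⟩, rfl⟩
    rwa [conjC_conjC]
  · exact fun hx => ⟨conjC V x, ⟨x, hx, rfl⟩, conjC_conjC x⟩

theorem map_conjC_cx_le (A : Submodule ℝ V) : (cx V A).map (conjC V) ≤ cx V A := by
  rw [cx, Submodule.map_span_le]
  rintro _ ⟨v, hv, rfl⟩
  refine Submodule.subset_span ⟨v, hv, ?_⟩
  simp [conjC, incl]

theorem cx_mono {A B : Submodule ℝ V} (hAB : A ≤ B) : cx V A ≤ cx V B :=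
  Submodule.span_mono (Set.image_mono hAB)

@[simp]
theorem cx_bot : cx V (⊥ : Submodule ℝ V) = ⊥ := by
  simp [cx, incl]

variable {W : ℤ → Submodule ℝ V} {F : ℤ → Submodule ℂ (ℂ ⊗[ℝ] V)}

theorem Lpq_le (h : IsRMHS W F) (p q : ℤ) :
    Lpq W F p q ≤ (cx V (W (p + q)) ⊓ (F q).map (conjC V)) ⊔ cx V (W (p + q - 1)) :=
  sup_le_sup_left (iSup₂_le fun _ hi => inf_le_left.trans (cx_mono (h.monoW (by omega)))) _

theorem map_conjC_Rpq_le (p q : ℤ) : (Rpq W F p q).map (conjC V) ≤ Lpq W F q p := by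
  refine le_sup_of_le_left ((Submodule.map_inf_le _).trans (inf_le_inf ?_ le_rfl))
  rw [add_comm]
  exact map_conjC_cx_le _

theorem map_conjC_Lpq_le (h : IsRMHS W F) (p q : ℤ) :
    (Lpq W F p q).map (conjC V) ≤ Rpq W F q p ⊔ cx V (W (p + q - 1)) := by
  refine (Submodule.map_mono (Lpq_le h p q)).trans ?_
  rw [Submodule.map_sup, Rpq, add_comm q p]
  refine sup_le_sup ((Submodule.map_inf_le _).trans (inf_le_inf (map_conjC_cx_le _) ?_))
    (map_conjC_cx_le _)
  rw [map_conjC_map_conjC]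

theorem cx_inf_map_conjC_le_Lpq (h : IsRMHS W F) {p q m : ℤ} (hm : m < p + q) :
    cx V (W m) ⊓ (F (m + 1 - p)).map (conjC V) ≤ Lpq W F p q := by
  rcases eq_or_lt_of_le (Int.le_sub_one_of_lt hm) with rfl | hm2
  · refine le_sup_of_le_left (inf_le_inf (cx_mono (h.monoW (by omega))) ?_)
    rw [show p + q - 1 + 1 - p = q by ring]
  · refine le_sup_of_le_right (le_iSup₂_of_le (p + q - m) (by omega) ?_)
    rw [show p + q - (p + q - m) = m by ring, show q - (p + q - m) + 1 = m + 1 - p by ring]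

theorem cx_le_hodge_decomp (h : IsRMHS W F) (m p : ℤ) :
    cx V (W m) ≤ (F p ⊓ cx V (W m)) ⊔ (cx V (W m) ⊓ (F (m + 1 - p)).map (conjC V)) ⊔
      cx V (W (m - 1)) := by
  rw [sup_assoc, inf_comm (cx V _), h.gr_sup m p]

theorem Rpq_inf_sup_cx_le_sub_one (h : IsRMHS W F) {p q m : ℤ} (hm : m < p + q) :
    Rpq W F p q ⊓ (Lpq W F p q ⊔ cx V (W m)) ≤
      Rpq W F p q ⊓ (Lpq W F p q ⊔ cx V (W (m - 1))) ⊔ cx V (W (p + q - 1)) := by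
  have hFR : F p ⊓ cx V (W m) ≤ Rpq W F p q :=
    le_inf (inf_le_right.trans (cx_mono (h.monoW hm.le))) inf_le_left
  have hW : cx V (W m) ≤ Lpq W F p q ⊔ cx V (W (m - 1)) ⊔ F p ⊓ cx V (W m) := by
    refine (cx_le_hodge_decomp h m p).trans (sup_le (sup_le le_sup_right ?_) ?_)
    · exact le_sup_of_le_left (le_sup_of_le_left (cx_inf_map_conjC_le_Lpq h hm))
    · exact le_sup_of_le_left le_sup_right
  calc Rpq W F p q ⊓ (Lpq W F p q ⊔ cx V (W m))
      ≤ Rpq W F p q ⊓ (Lpq W F p q ⊔ cx V (W (m - 1)) ⊔ F p ⊓ cx V (W m)) :=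
        inf_le_inf_left _ (sup_le (le_sup_of_le_left le_sup_left) hW)
    _ = Rpq W F p q ⊓ (Lpq W F p q ⊔ cx V (W (m - 1))) ⊔ F p ⊓ cx V (W m) :=
        (inf_sup_assoc_of_le _ hFR).symm
    _ ≤ _ := sup_le_sup_left (inf_le_right.trans (cx_mono (h.monoW (by omega)))) _

theorem Rpq_inf_sup_cx_le (h : IsRMHS W F) {p q m : ℤ} (hm : m < p + q) :
    Rpq W F p q ⊓ (Lpq W F p q ⊔ cx V (W m)) ≤ Ipq W F p q ⊔ cx V (W (p + q - 1)) := by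
  obtain ⟨a, ha⟩ := h.w_bot
  induction m using Int.induction_of_forall_le a with
  | hle m hma => simp [ha m hma, Ipq]
  | step m ih =>
    calc _ ≤ Rpq W F p q ⊓ (Lpq W F p q ⊔ cx V (W (m - 1))) ⊔ cx V (W (p + q - 1)) :=
          Rpq_inf_sup_cx_le_sub_one h hm
      _ ≤ _ := sup_le (ih (by omega)) le_sup_right

theorem Rpq_le (h : IsRMHS W F) (p q : ℤ) :
    Rpq W F p q ≤ F (p + 1) ⊓ cx V (W (p + q)) ⊔ Ipq W F p q ⊔ cx V (W (p + q - 1)) := by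
  have hFR : F (p + 1) ⊓ cx V (W (p + q)) ≤ Rpq W F p q :=
    le_inf inf_le_right (inf_le_left.trans (h.antiF (by omega)))
  have hW : cx V (W (p + q)) ≤
      Lpq W F p q ⊔ cx V (W (p + q - 1)) ⊔ F (p + 1) ⊓ cx V (W (p + q)) := by
    refine (cx_le_hodge_decomp h (p + q) (p + 1)).trans (sup_le (sup_le le_sup_right ?_) ?_)
    · rw [show p + q + 1 - (p + 1) = q by ring]
      exact le_sup_of_le_left (le_sup_of_le_left le_sup_left)
    · exact le_sup_of_le_left le_sup_right
  calc Rpq W F p q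
      ≤ Rpq W F p q ⊓ (Lpq W F p q ⊔ cx V (W (p + q - 1)) ⊔ F (p + 1) ⊓ cx V (W (p + q))) :=
        le_inf le_rfl (inf_le_left.trans hW)
    _ = Rpq W F p q ⊓ (Lpq W F p q ⊔ cx V (W (p + q - 1))) ⊔ F (p + 1) ⊓ cx V (W (p + q)) :=
        (inf_sup_assoc_of_le _ hFR).symm
    _ ≤ Ipq W F p q ⊔ cx V (W (p + q - 1)) ⊔ F (p + 1) ⊓ cx V (W (p + q)) :=
        sup_le_sup_right (Rpq_inf_sup_cx_le h (by omega)) _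
    _ = _ := by ac_rfl

theorem inf_cx_le_iSup_Ipq (h : IsRMHS W F) (p m : ℤ) :
    F p ⊓ cx V (W m) ≤
      (⨆ rs : ℤ × ℤ, ⨆ _ : rs.1 + rs.2 = m, Ipq W F rs.1 rs.2) ⊔ cx V (W (m - 1)) := by
  obtain ⟨b, hb⟩ := h.f_bot
  induction p using Int.induction_of_forall_ge b with
  | hge p hbp => simp [hb p hbp]
  | step p ih =>
    have hI : Ipq W F p (m - p) ≤ ⨆ rs : ℤ × ℤ, ⨆ _ : rs.1 + rs.2 = m, Ipq W F rs.1 rs.2 :=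
      le_iSup₂_of_le (p, m - p) (by simp) le_rfl
    have hR := Rpq_le h p (m - p)
    simp only [Rpq, add_sub_cancel] at hR
    rw [inf_comm]
    exact hR.trans (sup_le (sup_le ih (le_sup_of_le_left hI)) le_sup_right)

theorem cx_le_iSup_Ipq (h : IsRMHS W F) (m : ℤ) :
    cx V (W m) ≤ ⨆ rs : ℤ × ℤ, ⨆ _ : rs.1 + rs.2 ≤ m, Ipq W F rs.1 rs.2 := by
  obtain ⟨a, ha⟩ := h.w_bot
  obtain ⟨t, ht⟩ := h.f_top
  induction m using Int.induction_of_forall_le a with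
  | hle m hma => simp [ha m hma]
  | step m ih =>
    have hm : cx V (W m) ≤ F t ⊓ cx V (W m) := by simp [ht t le_rfl]
    refine hm.trans ((inf_cx_le_iSup_Ipq h t m).trans (sup_le ?_ (ih.trans ?_)))
    · exact iSup₂_mono' fun rs hrs => ⟨rs, hrs.le, le_rfl⟩
    · exact iSup₂_mono' fun rs hrs => ⟨rs, by omega, le_rfl⟩

theorem map_conjC_Ipq_le (h : IsRMHS W F) (p q : ℤ) :
    (Ipq W F p q).map (conjC V) ≤ Ipq W F q p ⊔ cx V (W (p + q - 1)) := by
  set E := cx V (W (p + q - 1))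
  have hcorr : Rpq W F q p ⊓ (Lpq W F q p ⊔ E) ≤ Ipq W F q p ⊔ E := by
    simpa only [add_comm q p] using Rpq_inf_sup_cx_le h (p := q) (q := p) (m := p + q - 1)
      (by omega)
  calc (Ipq W F p q).map (conjC V)
      ≤ Lpq W F q p ⊓ (Rpq W F q p ⊔ E) := (Submodule.map_inf_le _).trans
        (inf_le_inf (map_conjC_Rpq_le p q) (map_conjC_Lpq_le h p q))
    _ ≤ (E ⊔ Rpq W F q p) ⊓ (Lpq W F q p ⊔ E) :=
        le_inf (inf_le_right.trans (sup_comm _ _).le) (inf_le_left.trans le_sup_left)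
    _ = E ⊔ Rpq W F q p ⊓ (Lpq W F q p ⊔ E) := sup_inf_assoc_of_le _ le_sup_right
    _ ≤ Ipq W F q p ⊔ E := sup_le le_sup_right hcorr

end MHS

theorem deligne_splitting_conj_general
    (V : Type*) [AddCommGroup V] [Module ℝ V]
    (W : ℤ → Submodule ℝ V) (F : ℤ → Submodule ℂ (ℂ ⊗[ℝ] V))
    (h : MHS.IsRMHS W F) :
    ∀ p q : ℤ, (MHS.Ipq W F p q).map (MHS.conjC V) ≤
      MHS.Ipq W F q p ⊔
        ⨆ rs : ℤ × ℤ, ⨆ _ : rs.1 + rs.2 < p + q, MHS.Ipq W F rs.1 rs.2 := by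
  intro p q
  refine (MHS.map_conjC_Ipq_le h p q).trans (sup_le_sup_left ?_ _)
  exact (MHS.cx_le_iSup_Ipq h _).trans (iSup₂_mono' fun rs hrs => ⟨rs, by omega, le_rfl⟩)

/-- For an `ℝ`-mixed Hodge structure `(W, F)` on `V`, the
conjugate of the Deligne subspace `I^{p,q}` is congruent to `I^{q,p}` modulo
the sum of the Deligne subspaces of strictly smaller total weight:
`σ(I^{p,q}) ⊆ I^{q,p} + Σ_{r+s < p+q} I^{r,s}`. -/
theorem deligne_splitting_conj
    (V : Type*) [AddCommGroup V] [Module ℝ V] [FiniteDimensional ℝ V]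
    (W : ℤ → Submodule ℝ V) (F : ℤ → Submodule ℂ (ℂ ⊗[ℝ] V))
    (h : MHS.IsRMHS W F) :
    ∀ p q : ℤ, (MHS.Ipq W F p q).map (MHS.conjC V) ≤
      MHS.Ipq W F q p ⊔
        ⨆ rs : ℤ × ℤ, ⨆ _ : rs.1 + rs.2 < p + q, MHS.Ipq W F rs.1 rs.2 :=
  deligne_splitting_conj_general V W F h
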